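/- Suppose x, y, z, w ∈ S² satisfy ⟨y,z⟩ = ⟨z,w⟩ = ⟨y,w⟩ = 1/2 (so y,z,w form a spherical equilateral triangle of side π/3) and ⟨x,y⟩ = ⟨x,z⟩ = t. Then ⟨x,w⟩ equals β(t) := (2/3)t - (2/3)√(3/2 - 2t²) or (2/3)t + (2/3)√(3/2 - 2t²). -/
import Mathlib


open Real RealInnerProductSpace

noncomputable def beta (t : ℝ) : ℝ := (2/3) * t - (2/3) * Real.sqrt (3/2 - 2*t^2)

theorem fourth_inner_product
    (x y z w : EuclideanSpace ℝ (Fin 3))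
    (hx : ‖x‖ = 1) (hy : ‖y‖ = 1) (hz : ‖z‖ = 1) (hw : ‖w‖ = 1)
    (hyz : ⟪y, z⟫ = 1/2) (hzw : ⟪z, w⟫ = 1/2) (hyw : ⟪y, w⟫ = 1/2)
    (t : ℝ) (hxy : ⟪x, y⟫ = t) (hxz : ⟪x, z⟫ = t) :
    ⟪x, w⟫ = beta t ∨ ⟪x, w⟫ = (2/3) * t + (2/3) * Real.sqrt (3/2 - 2*t^2) := by
  set s : ℝ := ⟪x, w⟫ with hs
  have hyy : ⟪y, y⟫ = 1 := by
    rw [real_inner_self_eq_norm_sq, hy]; norm_num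
  have hzz : ⟪z, z⟫ = 1 := by
    rw [real_inner_self_eq_norm_sq, hz]; norm_num
  have hww : ⟪w, w⟫ = 1 := by
    rw [real_inner_self_eq_norm_sq, hw]; norm_num
  have hxx : ⟪x, x⟫ = 1 := by
    rw [real_inner_self_eq_norm_sq, hx]; norm_num
  have hzy : ⟪z, y⟫ = 1/2 := by rw [real_inner_comm]; exact hyz
  have hwy : ⟪w, y⟫ = 1/2 := by rw [real_inner_comm]; exact hyw
  have hwz : ⟪w, z⟫ = 1/2 := by rw [real_inner_comm]; exact hzw
  have hyx : ⟪y, x⟫ = t := by rw [real_inner_comm]; exact hxy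
  have hzx : ⟪z, x⟫ = t := by rw [real_inner_comm]; exact hxz
  have hwx : ⟪w, x⟫ = s := by rw [real_inner_comm]
  -- linear independence of y, z, w
  have hli : LinearIndependent ℝ ![y, z, w] := by
    rw [Fintype.linearIndependent_iff]
    intro g hg
    simp only [Fin.sum_univ_three, Matrix.cons_val_zero, Matrix.cons_val_one, Matrix.head_cons,
      Matrix.cons_val_two, Matrix.tail_cons] at hg
    have e1 : ⟪g 0 • y + g 1 • z + g 2 • w, y⟫ = (0 : ℝ) := by rw [hg]; simp
    have e2 : ⟪g 0 • y + g 1 • z + g 2 • w, z⟫ = (0 : ℝ) := by rw [hg]; simp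
    have e3 : ⟪g 0 • y + g 1 • z + g 2 • w, w⟫ = (0 : ℝ) := by rw [hg]; simp
    simp only [inner_add_left, real_inner_smul_left, hyy, hzz, hww, hyz, hzw, hyw,
      hzy, hwy, hwz] at e1 e2 e3
    intro i
    fin_cases i <;> simp <;> linarith
  have hspan : Submodule.span ℝ (Set.range ![y, z, w]) = ⊤ := by
    apply hli.span_eq_top_of_card_eq_finrank
    simp [finrank_euclideanSpace_fin]
  have hxmem : x ∈ Submodule.span ℝ (Set.range ![y, z, w]) := by
    rw [hspan]; trivial
  rw [Submodule.mem_span_range_iff_exists_fun] at hxmem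
  obtain ⟨c, hc⟩ := hxmem
  rw [Fin.sum_univ_three] at hc
  simp only [Matrix.cons_val_zero, Matrix.cons_val_one, Matrix.head_cons,
    Matrix.cons_val_two, Matrix.tail_cons] at hc
  have e1 : ⟪c 0 • y + c 1 • z + c 2 • w, y⟫ = t := by rw [hc]; exact hxy
  have e2 : ⟪c 0 • y + c 1 • z + c 2 • w, z⟫ = t := by rw [hc]; exact hxz
  have e3 : ⟪c 0 • y + c 1 • z + c 2 • w, w⟫ = s := by rw [hc]
  have e4 : ⟪c 0 • y + c 1 • z + c 2 • w, x⟫ = 1 := by rw [hc]; exact hxx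
  simp only [inner_add_left, real_inner_smul_left, hyy, hzz, hww, hyz, hzw, hyw,
    hzy, hwy, hwz, hyx, hzx, hwx] at e1 e2 e3 e4
  -- the quadratic relation
  have hquad : 2*t^2 - 2*t*s + (3/2)*s^2 = 1 := by
    have hc01 : c 0 = c 1 := by linarith
    have hc0 : c 0 = t - s/2 := by linarith
    have hc1 : c 1 = t - s/2 := by linarith
    have hc2 : c 2 = (3/2)*s - t := by linarith
    linear_combination e4 - t * hc0 - t * hc1 - s * hc2
  have hsq : (s - (2/3)*t)^2 = (4/9) * (3/2 - 2*t^2) := by linear_combination (2/3)*hquad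
  have hpos : (0:ℝ) ≤ 3/2 - 2*t^2 := by nlinarith [sq_nonneg (s - (2/3)*t)]
  have hrt : ((2/3) * Real.sqrt (3/2 - 2*t^2))^2 = (4/9) * (3/2 - 2*t^2) := by
    rw [mul_pow, sq_sqrt hpos]; ring
  have key : (s - (2/3)*t - (2/3) * Real.sqrt (3/2 - 2*t^2)) *
      (s - (2/3)*t + (2/3) * Real.sqrt (3/2 - 2*t^2)) = 0 := by
    linear_combination hsq - hrt
  rcases mul_eq_zero.mp key with h | h
  · right; linear_combination h
  · left; simp only [beta]; linear_combination h
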